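/- arXiv:2410.22085 — 4 statements merged into one kernel-verified Lean document; each statement's English description precedes it below -/
import Mathlib

section
/- Let f, g be real random variables (on the same probability space) with E|f|^p ≤ ν^p and E|g|^p ≤ ν^p for some p > 2, ν > 0, and let M > 0. Then |E[f g] − E[τ_M(f) τ_M(g)] + E[τ_M(f)]·E[τ_M(g)] − E[f]·E[g]| ≤ 4 ν^p M^{2−p} whenever E f = E g = 0, i.e., |Cov(f,g) − Cov(τ_M(f), τ_M(g))| ≤ 4 ν^p M^{2−p}. -/
open MeasureTheory

private lemma tau_abs_le (M x : ℝ) (hM : 0 < M) : |max (-M) (min M x)| ≤ M := by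
  rw [abs_le]
  exact ⟨le_max_left _ _, max_le (by linarith) (min_le_left _ _)⟩

private lemma tau_eq (M x : ℝ) (h : |x| ≤ M) : max (-M) (min M x) = x := by
  rw [abs_le] at h
  rw [min_eq_right h.2, max_eq_right h.1]

private lemma sub_tau_le (M x : ℝ) (hM : 0 < M) : |x - max (-M) (min M x)| ≤ |x| := by
  rcases le_or_gt x (-M) with h | h
  · rw [min_eq_right (by linarith), max_eq_left h]
    rw [abs_of_nonpos (by linarith), abs_of_nonpos (by linarith)]
    linarith
  rcases le_or_gt M x with h2 | h2
  · rw [min_eq_left h2, max_eq_right (by linarith)]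
    rw [abs_of_nonneg (by linarith), abs_of_nonneg (by linarith)]
    linarith
  · rw [tau_eq M x (abs_le.mpr ⟨h.le, h2.le⟩)]
    simp

/-- `a * M ≤ a^p * M^(2-p)` when `M ≤ a`. -/
private lemma h1 (a M p : ℝ) (hM : 0 < M) (hp : 2 < p) (ha : M ≤ a) :
    a * M ≤ a ^ p * M ^ (2 - p) := by
  have ha0 : 0 < a := lt_of_lt_of_le hM ha
  have hMp : M ^ (p - 1) ≤ a ^ (p - 1) := Real.rpow_le_rpow hM.le ha (by linarith)
  have e1 : M ^ (p - 1) * M ^ (2 - p) = M := by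
    rw [← Real.rpow_add hM, show p - 1 + (2 - p) = 1 by ring, Real.rpow_one]
  have e2 : a * a ^ (p - 1) = a ^ p := by
    have h := Real.rpow_add ha0 1 (p - 1)
    rw [Real.rpow_one, show (1:ℝ) + (p - 1) = p by ring] at h
    exact h.symm
  calc a * M = a * (M ^ (p - 1) * M ^ (2 - p)) := by rw [e1]
    _ ≤ a * (a ^ (p - 1) * M ^ (2 - p)) := by
        have := mul_le_mul_of_nonneg_right hMp (Real.rpow_nonneg hM.le (2 - p))
        exact mul_le_mul_of_nonneg_left this ha0.le
    _ = a ^ p * M ^ (2 - p) := by rw [← mul_assoc, e2]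

/-- `a * a ≤ a^p * M^(2-p)` when `M ≤ a`. -/
private lemma h2 (a M p : ℝ) (hM : 0 < M) (hp : 2 < p) (ha : M ≤ a) :
    a * a ≤ a ^ p * M ^ (2 - p) := by
  have ha0 : 0 < a := lt_of_lt_of_le hM ha
  have hMp : M ^ (p - 2) ≤ a ^ (p - 2) := Real.rpow_le_rpow hM.le ha (by linarith)
  have e1 : M ^ (p - 2) * M ^ (2 - p) = 1 := by
    rw [← Real.rpow_add hM, show p - 2 + (2 - p) = 0 by ring, Real.rpow_zero]
  have e2 : a * a * a ^ (p - 2) = a ^ p := by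
    have h := Real.rpow_add ha0 2 (p - 2)
    rw [show (2:ℝ) + (p - 2) = p by ring, Real.rpow_two] at h
    rw [h]; ring
  calc a * a = a * a * (M ^ (p - 2) * M ^ (2 - p)) := by rw [e1, mul_one]
    _ ≤ a * a * (a ^ (p - 2) * M ^ (2 - p)) := by
        have := mul_le_mul_of_nonneg_right hMp (Real.rpow_nonneg hM.le (2 - p))
        exact mul_le_mul_of_nonneg_left this (by positivity)
    _ = a ^ p * M ^ (2 - p) := by rw [← mul_assoc, e2]

/-- Truncation bias bound: `|x - τ x| ≤ |x|^p M^(1-p)`. -/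
private lemma bias_bound (M x p : ℝ) (hM : 0 < M) (hp : 2 < p) :
    |x - max (-M) (min M x)| ≤ |x| ^ p * M ^ (1 - p) := by
  rcases le_or_gt (|x|) M with h | h
  · rw [tau_eq M x h, sub_self, abs_zero]
    positivity
  · have hx0 : 0 < |x| := lt_trans hM h
    have e2 : |x| * |x| ^ (p - 1) = |x| ^ p := by
      have h := Real.rpow_add hx0 1 (p - 1)
      rw [Real.rpow_one, show (1:ℝ) + (p - 1) = p by ring] at h
      exact h.symm
    have hMp : M ^ (p - 1) ≤ |x| ^ (p - 1) := Real.rpow_le_rpow hM.le h.le (by linarith)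
    have e1 : M ^ (p - 1) * M ^ (1 - p) = 1 := by
      rw [← Real.rpow_add hM, show p - 1 + (1 - p) = 0 by ring, Real.rpow_zero]
    calc |x - max (-M) (min M x)| ≤ |x| := sub_tau_le M x hM
      _ = |x| * (M ^ (p - 1) * M ^ (1 - p)) := by rw [e1, mul_one]
      _ ≤ |x| * (|x| ^ (p - 1) * M ^ (1 - p)) := by
          have := mul_le_mul_of_nonneg_right hMp (Real.rpow_nonneg hM.le (1 - p))
          exact mul_le_mul_of_nonneg_left this hx0.le
      _ = |x| ^ p * M ^ (1 - p) := by rw [← mul_assoc, e2]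

/-- Pointwise product bound: `|xy - τx τy| ≤ (|x|^p + |y|^p) M^(2-p)`. -/
private lemma prod_bound (M x y p : ℝ) (hM : 0 < M) (hp : 2 < p) :
    |x * y - max (-M) (min M x) * max (-M) (min M y)| ≤
      (|x| ^ p + |y| ^ p) * M ^ (2 - p) := by
  have hxp : (0:ℝ) ≤ |x| ^ p * M ^ (2 - p) := by positivity
  have hyp : (0:ℝ) ≤ |y| ^ p * M ^ (2 - p) := by positivity
  have hrhs : (|x| ^ p + |y| ^ p) * M ^ (2 - p)
      = |x| ^ p * M ^ (2 - p) + |y| ^ p * M ^ (2 - p) := by ring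
  rcases le_or_gt (|x|) M with hx | hx
  · rcases le_or_gt (|y|) M with hy | hy
    · rw [tau_eq M x hx, tau_eq M y hy, sub_self, abs_zero]
      positivity
    · -- |x| ≤ M < |y| : |x (y - τy)| ≤ M * |y| ≤ |y|^p M^(2-p)
      rw [tau_eq M x hx, show x * y - x * max (-M) (min M y) = x * (y - max (-M) (min M y))
        by ring, abs_mul]
      have hb : |y - max (-M) (min M y)| ≤ |y| := sub_tau_le M y hM
      calc |x| * |y - max (-M) (min M y)| ≤ M * |y| := by
            exact mul_le_mul hx hb (abs_nonneg _) hM.le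
        _ = |y| * M := by ring
        _ ≤ |y| ^ p * M ^ (2 - p) := h1 |y| M p hM hp hy.le
        _ ≤ (|x| ^ p + |y| ^ p) * M ^ (2 - p) := by rw [hrhs]; linarith
  · rcases le_or_gt (|y|) M with hy | hy
    · rw [tau_eq M y hy, show x * y - max (-M) (min M x) * y = (x - max (-M) (min M x)) * y
        by ring, abs_mul]
      have hb : |x - max (-M) (min M x)| ≤ |x| := sub_tau_le M x hM
      calc |x - max (-M) (min M x)| * |y| ≤ |x| * M := by
            exact mul_le_mul hb hy (abs_nonneg _) (abs_nonneg _)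
        _ ≤ |x| ^ p * M ^ (2 - p) := h1 |x| M p hM hp hx.le
        _ ≤ (|x| ^ p + |y| ^ p) * M ^ (2 - p) := by rw [hrhs]; linarith
    · -- both large
      have ht : |max (-M) (min M x)| ≤ M := tau_abs_le M x hM
      have hs : |max (-M) (min M y)| ≤ M := tau_abs_le M y hM
      have h4 : |max (-M) (min M x) * max (-M) (min M y)| ≤ M * M := by
        rw [abs_mul]; exact mul_le_mul ht hs (abs_nonneg _) hM.le
      have hMM : M * M ≤ |x| * |y| :=
        mul_le_mul hx.le hy.le hM.le (abs_nonneg _)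
      have tri : |x * y - max (-M) (min M x) * max (-M) (min M y)| ≤
          |x * y| + |max (-M) (min M x) * max (-M) (min M y)| := abs_sub _ _
      have hxx : |x| * |x| ≤ |x| ^ p * M ^ (2 - p) := h2 |x| M p hM hp hx.le
      have hyy : |y| * |y| ≤ |y| ^ p * M ^ (2 - p) := h2 |y| M p hM hp hy.le
      rw [abs_mul] at tri
      have h2ab : |x| * |y| + |x| * |y| ≤ |x| * |x| + |y| * |y| := by nlinarith [sq_nonneg (|x| - |y|)]
      rw [hrhs]
      linarith

/-- `|x| ≤ |x|^p + 1` for `1 ≤ p`. -/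
private lemma abs_le_rpow_add_one (x p : ℝ) (hp : 1 ≤ p) : |x| ≤ |x| ^ p + 1 := by
  rcases le_or_gt (|x|) 1 with h | h
  · have : (0:ℝ) ≤ |x| ^ p := Real.rpow_nonneg (abs_nonneg _) _
    linarith
  · have : |x| ^ (1:ℝ) ≤ |x| ^ p := Real.rpow_le_rpow_of_exponent_le h.le hp
    rw [Real.rpow_one] at this
    linarith

/-- Covariance bound (Lemma 6.5): for centered `f, g` with `p`-th moments at most `ν^p`,
`|Cov(f,g) − Cov(τ_M f, τ_M g)| ≤ 4 ν^p M^{2−p}`. -/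
theorem stmt_3 {Ω : Type*} [MeasurableSpace Ω] (μ : Measure Ω) [IsProbabilityMeasure μ]
    (f g : Ω → ℝ) (hf : Measurable f) (hg : Measurable g)
    (p ν M : ℝ) (hp : 2 < p) (hν : 0 < ν) (hM : 0 < M)
    (hfint : Integrable (fun ω => |f ω| ^ p) μ)
    (hgint : Integrable (fun ω => |g ω| ^ p) μ)
    (hfgint : Integrable (fun ω => f ω * g ω) μ)
    (hfmom : ∫ ω, |f ω| ^ p ∂μ ≤ ν ^ p)
    (hgmom : ∫ ω, |g ω| ^ p ∂μ ≤ ν ^ p)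
    (hfmean : ∫ ω, f ω ∂μ = 0) (hgmean : ∫ ω, g ω ∂μ = 0) :
    |(∫ ω, f ω * g ω ∂μ)
        - (∫ ω, (max (-M) (min M (f ω))) * (max (-M) (min M (g ω))) ∂μ)
        + (∫ ω, max (-M) (min M (f ω)) ∂μ) * (∫ ω, max (-M) (min M (g ω)) ∂μ)
        - (∫ ω, f ω ∂μ) * (∫ ω, g ω ∂μ)|
      ≤ 4 * ν ^ p * M ^ (2 - p) := by
  have hνp : (0:ℝ) ≤ ν ^ p := Real.rpow_nonneg hν.le _
  have hM2p : (0:ℝ) ≤ M ^ (2 - p) := Real.rpow_nonneg hM.le _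
  have hM1p : (0:ℝ) ≤ M ^ (1 - p) := Real.rpow_nonneg hM.le _
  have abs_int : ∀ (h : Ω → ℝ), |∫ ω, h ω ∂μ| ≤ ∫ ω, |h ω| ∂μ := fun h => by
    simpa [Real.norm_eq_abs] using norm_integral_le_integral_norm (μ := μ) h
  -- measurability of truncations
  have hτf : Measurable (fun ω => max (-M) (min M (f ω))) :=
    measurable_const.max (measurable_const.min hf)
  have hτg : Measurable (fun ω => max (-M) (min M (g ω))) :=
    measurable_const.max (measurable_const.min hg)
  -- integrability
  have hτf_int : Integrable (fun ω => max (-M) (min M (f ω))) μ := by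
    refine (integrable_const M).mono' hτf.aestronglyMeasurable ?_
    filter_upwards with ω
    rw [Real.norm_eq_abs]; exact tau_abs_le M (f ω) hM
  have hτg_int : Integrable (fun ω => max (-M) (min M (g ω))) μ := by
    refine (integrable_const M).mono' hτg.aestronglyMeasurable ?_
    filter_upwards with ω
    rw [Real.norm_eq_abs]; exact tau_abs_le M (g ω) hM
  have hττ_int : Integrable (fun ω => max (-M) (min M (f ω)) * max (-M) (min M (g ω))) μ := by
    refine (integrable_const (M * M)).mono' (hτf.mul hτg).aestronglyMeasurable ?_
    filter_upwards with ω
    rw [Real.norm_eq_abs, abs_mul]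
    exact mul_le_mul (tau_abs_le M (f ω) hM) (tau_abs_le M (g ω) hM) (abs_nonneg _) hM.le
  have hf_int : Integrable f μ := by
    refine (hfint.add (integrable_const 1)).mono' hf.aestronglyMeasurable ?_
    filter_upwards with ω
    rw [Real.norm_eq_abs]
    exact abs_le_rpow_add_one (f ω) p (by linarith)
  have hg_int : Integrable g μ := by
    refine (hgint.add (integrable_const 1)).mono' hg.aestronglyMeasurable ?_
    filter_upwards with ω
    rw [Real.norm_eq_abs]
    exact abs_le_rpow_add_one (g ω) p (by linarith)
  -- bound on |∫ τf| via bias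
  have bias : ∀ (h : Ω → ℝ), Measurable h → Integrable h μ →
      Integrable (fun ω => |h ω| ^ p) μ → (∫ ω, |h ω| ^ p ∂μ ≤ ν ^ p) →
      (∫ ω, h ω ∂μ = 0) →
      |∫ ω, max (-M) (min M (h ω)) ∂μ| ≤ ν ^ p * M ^ (1 - p) := by
    intro h hm hint hpint hmom hmean
    have hτ : Measurable (fun ω => max (-M) (min M (h ω))) :=
      measurable_const.max (measurable_const.min hm)
    have hτint : Integrable (fun ω => max (-M) (min M (h ω))) μ := by
      refine (integrable_const M).mono' hτ.aestronglyMeasurable ?_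
      filter_upwards with ω
      rw [Real.norm_eq_abs]; exact tau_abs_le M (h ω) hM
    have e : ∫ ω, (h ω - max (-M) (min M (h ω))) ∂μ = - ∫ ω, max (-M) (min M (h ω)) ∂μ := by
      rw [integral_sub hint hτint, hmean]; ring
    have habs : |∫ ω, (h ω - max (-M) (min M (h ω))) ∂μ| ≤
        ∫ ω, |h ω| ^ p * M ^ (1 - p) ∂μ := by
      refine (abs_int _).trans ?_
      refine integral_mono (hint.sub hτint).abs (hpint.mul_const _) ?_
      intro ω
      exact bias_bound M (h ω) p hM hp
    rw [e, abs_neg] at habs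
    calc |∫ ω, max (-M) (min M (h ω)) ∂μ| ≤ ∫ ω, |h ω| ^ p * M ^ (1 - p) ∂μ := habs
      _ = (∫ ω, |h ω| ^ p ∂μ) * M ^ (1 - p) := integral_mul_const _ _
      _ ≤ ν ^ p * M ^ (1 - p) := mul_le_mul_of_nonneg_right hmom hM1p
  have Bf : |∫ ω, max (-M) (min M (f ω)) ∂μ| ≤ ν ^ p * M ^ (1 - p) :=
    bias f hf hf_int hfint hfmom hfmean
  have Bg : |∫ ω, max (-M) (min M (g ω)) ∂μ| ≤ M := by
    refine (abs_int _).trans ?_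
    calc ∫ ω, |max (-M) (min M (g ω))| ∂μ ≤ ∫ _ω, M ∂μ := by
          refine integral_mono hτg_int.abs (integrable_const M) ?_
          intro ω; exact tau_abs_le M (g ω) hM
      _ = M := by simp
  -- product bound
  have A : |(∫ ω, f ω * g ω ∂μ) - ∫ ω, max (-M) (min M (f ω)) * max (-M) (min M (g ω)) ∂μ|
      ≤ 2 * ν ^ p * M ^ (2 - p) := by
    rw [← integral_sub hfgint hττ_int]
    refine (abs_int _).trans ?_
    have step : ∫ ω, |f ω * g ω - max (-M) (min M (f ω)) * max (-M) (min M (g ω))| ∂μ ≤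
        ∫ ω, (|f ω| ^ p + |g ω| ^ p) * M ^ (2 - p) ∂μ := by
      refine integral_mono (hfgint.sub hττ_int).abs ((hfint.add hgint).mul_const _) ?_
      intro ω
      exact prod_bound M (f ω) (g ω) p hM hp
    refine step.trans ?_
    rw [integral_mul_const, integral_add hfint hgint]
    have h2ν : (∫ ω, |f ω| ^ p ∂μ) + (∫ ω, |g ω| ^ p ∂μ) ≤ 2 * ν ^ p := by linarith
    exact mul_le_mul_of_nonneg_right h2ν hM2p
  -- combine
  rw [hfmean, hgmean, mul_zero, sub_zero]
  have hprod : |(∫ ω, max (-M) (min M (f ω)) ∂μ) * (∫ ω, max (-M) (min M (g ω)) ∂μ)| ≤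
      ν ^ p * M ^ (2 - p) := by
    rw [abs_mul]
    calc |∫ ω, max (-M) (min M (f ω)) ∂μ| * |∫ ω, max (-M) (min M (g ω)) ∂μ| ≤
        (ν ^ p * M ^ (1 - p)) * M :=
          mul_le_mul Bf Bg (abs_nonneg _) (by positivity)
      _ = ν ^ p * M ^ (2 - p) := by
          rw [mul_assoc]
          congr 1
          rw [show (2:ℝ) - p = (1 - p) + 1 by ring, Real.rpow_add hM, Real.rpow_one]
  calc |(∫ ω, f ω * g ω ∂μ)
        - (∫ ω, max (-M) (min M (f ω)) * max (-M) (min M (g ω)) ∂μ)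
        + (∫ ω, max (-M) (min M (f ω)) ∂μ) * (∫ ω, max (-M) (min M (g ω)) ∂μ)|
      ≤ |(∫ ω, f ω * g ω ∂μ)
        - (∫ ω, max (-M) (min M (f ω)) * max (-M) (min M (g ω)) ∂μ)|
        + |(∫ ω, max (-M) (min M (f ω)) ∂μ) * (∫ ω, max (-M) (min M (g ω)) ∂μ)| :=
        abs_add_le _ _
    _ ≤ 2 * ν ^ p * M ^ (2 - p) + ν ^ p * M ^ (2 - p) := add_le_add A hprod
    _ ≤ 4 * ν ^ p * M ^ (2 - p) := by nlinarith
end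

section
/- Let (x_1,…,x_n) and (y_1,…,y_n) be real vectors with k < n/2, and let T_{n,k}(y) = (1/(n−2k)) Σ_{i=k+1}^{n−k} y_{(i)} be the trimmed mean computed on the possibly corrupted sample y, where y_{(1)} ≤ ⋯ ≤ y_{(n)}. If |{i : x_i ≠ y_i}| ≤ k and |x_i| ≤ M for all i, then |T_{n,k}(y) − (1/n)Σ_{i=1}^n x_i| ≤ 6(k/n)M. -/
lemma card_filter_val (n : ℕ) (p : ℕ → Prop) [DecidablePred p] :
    (Finset.univ.filter (fun j : Fin n => p j.val)).card
      = ((Finset.range n).filter p).card := by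
  refine Finset.card_bij' (fun j _ => (j : ℕ))
    (fun m hm => ⟨m, by simpa using (Finset.mem_filter.mp hm).1⟩) ?_ ?_ ?_ ?_
  · intro j hj
    simp only [Finset.mem_filter, Finset.mem_univ, true_and] at hj
    simp [Finset.mem_range, j.isLt, hj]
  · intro m hm
    simp only [Finset.mem_filter, Finset.mem_univ, true_and]
    exact (Finset.mem_filter.mp hm).2
  · intro j hj; rfl
  · intro m hm; rfl

/-- Bounding lemma (clean special case): if `y` differs from `x` in at most `k`
coordinates, `|x i| ≤ M` for all `i`, and `2k < n`, then the `k`-trimmed mean of `y`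
is within `6 (k/n) M` of the empirical mean of `x`. Here `σ` sorts `y`. -/
theorem stmt_10 (n k : ℕ) (M : ℝ) (x y : Fin n → ℝ) (σ : Equiv.Perm (Fin n))
    (hσ : Monotone (fun i => y (σ i)))
    (hdiff : (Finset.univ.filter fun i => x i ≠ y i).card ≤ k)
    (hbound : ∀ i, |x i| ≤ M)
    (hkn : 2 * k < n) :
    |(∑ i ∈ Finset.univ.filter (fun i : Fin n => k ≤ (i : ℕ) ∧ (i : ℕ) < n - k), y (σ i))
          / ((n : ℝ) - 2 * k)
        - (∑ i, x i) / (n : ℝ)| ≤ 6 * ((k : ℝ) / n) * M := by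
  classical
  have hn0 : 0 < n := by omega
  have hM : 0 ≤ M := le_trans (abs_nonneg _) (hbound ⟨0, hn0⟩)
  set A := Finset.univ.filter (fun i : Fin n => k ≤ (i : ℕ) ∧ (i : ℕ) < n - k) with hAdef
  -- cardinality of A
  have hAcard : A.card = n - 2 * k := by
    rw [hAdef, card_filter_val n (fun m => k ≤ m ∧ m < n - k)]
    have : (Finset.range n).filter (fun m => k ≤ m ∧ m < n - k) = Finset.Ico k (n - k) := by
      ext m; simp [Finset.mem_Ico]; omega
    rw [this, Nat.card_Ico]; omega
  -- the set of positions where (after permuting) x and y differ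
  set Bad := Finset.univ.filter (fun j : Fin n => x (σ j) ≠ y (σ j)) with hBaddef
  have hBadcard : Bad.card ≤ k := by
    refine le_trans (Finset.card_le_card_of_injOn (fun j => σ j) ?_ ?_) hdiff
    · intro j hj
      simp only [hBaddef, Finset.mem_filter, Finset.mem_univ, true_and] at hj ⊢
      simpa using hj
    · intro a _ b _ h; exact σ.injective h
  -- every kept value is bounded by M
  have key : ∀ i ∈ A, |y (σ i)| ≤ M := by
    intro i hi
    simp only [hAdef, Finset.mem_filter, Finset.mem_univ, true_and] at hi
    obtain ⟨hik, hin⟩ := hi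
    rw [abs_le]
    constructor
    · -- lower bound: a clean value among bottom k+1 positions
      have hBc : (Finset.univ.filter (fun j : Fin n => j.val ≤ k)).card = k + 1 := by
        rw [card_filter_val n (fun m => m ≤ k)]
        have : (Finset.range n).filter (fun m => m ≤ k) = Finset.range (k + 1) := by
          ext m; simp; omega
        rw [this, Finset.card_range]
      have hnotsub : ¬ (Finset.univ.filter (fun j : Fin n => j.val ≤ k)) ⊆ Bad := by
        intro hsub
        have := Finset.card_le_card hsub
        omega
      obtain ⟨j, hjB, hjBad⟩ := Finset.not_subset.mp hnotsub
      simp only [Finset.mem_filter, Finset.mem_univ, true_and] at hjB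
      have hclean : x (σ j) = y (σ j) := by
        by_contra hne
        exact hjBad (by simp [hBaddef, hne])
      have hji : j ≤ i := by
        rw [Fin.le_def]; omega
      calc -M ≤ x (σ j) := neg_le_of_abs_le (hbound _)
        _ = y (σ j) := hclean
        _ ≤ y (σ i) := hσ hji
    · -- upper bound: a clean value among top k+1 positions
      have hBc : (Finset.univ.filter (fun j : Fin n => n - k - 1 ≤ j.val)).card = k + 1 := by
        rw [card_filter_val n (fun m => n - k - 1 ≤ m)]
        have : (Finset.range n).filter (fun m => n - k - 1 ≤ m) = Finset.Ico (n - k - 1) n := by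
          ext m; simp [Finset.mem_Ico]; omega
        rw [this, Nat.card_Ico]; omega
      have hnotsub : ¬ (Finset.univ.filter (fun j : Fin n => n - k - 1 ≤ j.val)) ⊆ Bad := by
        intro hsub
        have := Finset.card_le_card hsub
        omega
      obtain ⟨j, hjB, hjBad⟩ := Finset.not_subset.mp hnotsub
      simp only [Finset.mem_filter, Finset.mem_univ, true_and] at hjB
      have hclean : x (σ j) = y (σ j) := by
        by_contra hne
        exact hjBad (by simp [hBaddef, hne])
      have hij : i ≤ j := by
        rw [Fin.le_def]; omega
      calc y (σ i) ≤ y (σ j) := hσ hij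
        _ = x (σ j) := hclean.symm
        _ ≤ M := le_of_abs_le (hbound _)
  -- notation for the three sums
  set S := ∑ i ∈ A, y (σ i) with hSdef
  set S2 := ∑ i ∈ A, x (σ i) with hS2def
  set X := ∑ i, x i with hXdef
  have hKcast : ((2 * k : ℕ) : ℝ) = 2 * (k : ℝ) := by push_cast; ring
  have hAcardR : (A.card : ℝ) = (n : ℝ) - 2 * k := by
    rw [hAcard, Nat.cast_sub (by omega : 2 * k ≤ n)]; push_cast; ring
  -- |S| ≤ (n - 2k) M
  have hS : |S| ≤ ((n : ℝ) - 2 * k) * M := by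
    calc |S| ≤ ∑ i ∈ A, |y (σ i)| := Finset.abs_sum_le_sum_abs _ _
      _ ≤ ∑ _i ∈ A, M := Finset.sum_le_sum key
      _ = (A.card : ℝ) * M := by rw [Finset.sum_const, nsmul_eq_mul]
      _ = ((n : ℝ) - 2 * k) * M := by rw [hAcardR]
  -- |S - S2| ≤ 2 k M
  have h12 : |S - S2| ≤ 2 * k * M := by
    have hsum : S - S2 = ∑ i ∈ A.filter (fun i => x (σ i) ≠ y (σ i)), (y (σ i) - x (σ i)) := by
      rw [hSdef, hS2def, ← Finset.sum_sub_distrib]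
      refine (Finset.sum_filter_of_ne ?_).symm
      intro i _ hne heq
      exact hne (by rw [heq]; ring)
    have hsub : A.filter (fun i => x (σ i) ≠ y (σ i)) ⊆ Bad := by
      intro i hi
      simp only [Finset.mem_filter] at hi
      simp [hBaddef, hi.2]
    have hcard : (A.filter (fun i => x (σ i) ≠ y (σ i))).card ≤ k :=
      le_trans (Finset.card_le_card hsub) hBadcard
    calc |S - S2| ≤ ∑ i ∈ A.filter (fun i => x (σ i) ≠ y (σ i)), |y (σ i) - x (σ i)| := by
          rw [hsum]; exact Finset.abs_sum_le_sum_abs _ _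
      _ ≤ ∑ _i ∈ A.filter (fun i => x (σ i) ≠ y (σ i)), (2 * M) := by
          refine Finset.sum_le_sum ?_
          intro i hi
          have hiA : i ∈ A := Finset.mem_of_mem_filter _ hi
          calc |y (σ i) - x (σ i)| ≤ |y (σ i)| + |x (σ i)| := abs_sub _ _
            _ ≤ M + M := add_le_add (key i hiA) (hbound _)
            _ = 2 * M := by ring
      _ = ((A.filter (fun i => x (σ i) ≠ y (σ i))).card : ℝ) * (2 * M) := by
          rw [Finset.sum_const, nsmul_eq_mul]
      _ ≤ (k : ℝ) * (2 * M) := by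
          have : ((A.filter (fun i => x (σ i) ≠ y (σ i))).card : ℝ) ≤ (k : ℝ) := by
            exact_mod_cast hcard
          nlinarith
      _ = 2 * k * M := by ring
  -- |S2 - X| ≤ 2 k M
  have h23 : |S2 - X| ≤ 2 * k * M := by
    have hperm : ∑ i, x (σ i) = X := Equiv.sum_comp σ x
    have hsplit : S2 + ∑ i ∈ Aᶜ, x (σ i) = X := by
      rw [hS2def, ← hperm, Finset.sum_add_sum_compl]
    have hcompl : (Aᶜ.card : ℝ) = 2 * k := by
      have : Aᶜ.card = 2 * k := by
        rw [Finset.card_compl, hAcard, Fintype.card_fin]; omega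
      rw [this]; push_cast; ring
    have : |∑ i ∈ Aᶜ, x (σ i)| ≤ 2 * k * M := by
      calc |∑ i ∈ Aᶜ, x (σ i)| ≤ ∑ i ∈ Aᶜ, |x (σ i)| := Finset.abs_sum_le_sum_abs _ _
        _ ≤ ∑ _i ∈ Aᶜ, M := Finset.sum_le_sum (fun i _ => hbound _)
        _ = (Aᶜ.card : ℝ) * M := by rw [Finset.sum_const, nsmul_eq_mul]
        _ = 2 * k * M := by rw [hcompl]
    have heq : S2 - X = -(∑ i ∈ Aᶜ, x (σ i)) := by linarith
    rw [heq, abs_neg]; exact this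
  -- final algebra
  have hnR : (0 : ℝ) < n := by exact_mod_cast hn0
  have hkR : (2 * (k : ℝ)) < n := by exact_mod_cast hkn
  have hD : (0 : ℝ) < (n : ℝ) - 2 * k := by linarith
  have hK0 : (0 : ℝ) ≤ (k : ℝ) := Nat.cast_nonneg k
  have main : |S * n - X * ((n : ℝ) - 2 * k)| ≤ 6 * k * M * ((n : ℝ) - 2 * k) := by
    have e : S * n - X * ((n : ℝ) - 2 * k)
        = S * (2 * k) + ((S - S2) + (S2 - X)) * ((n : ℝ) - 2 * k) := by ring
    rw [e]
    calc |S * (2 * k) + ((S - S2) + (S2 - X)) * ((n : ℝ) - 2 * k)|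
        ≤ |S| * (2 * k) + (|S - S2| + |S2 - X|) * ((n : ℝ) - 2 * k) := by
          refine (abs_add_le _ _).trans ?_
          have h1 : |S * (2 * (k:ℝ))| = |S| * (2 * k) := by
            rw [abs_mul, abs_of_nonneg (by linarith : (0:ℝ) ≤ 2 * (k:ℝ))]
          have h2 : |((S - S2) + (S2 - X)) * ((n : ℝ) - 2 * k)|
              ≤ (|S - S2| + |S2 - X|) * ((n : ℝ) - 2 * k) := by
            rw [abs_mul, abs_of_pos hD]
            exact mul_le_mul_of_nonneg_right (abs_add_le _ _) hD.le
          exact add_le_add (le_of_eq h1) h2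
      _ ≤ (((n : ℝ) - 2 * k) * M) * (2 * k)
          + (2 * k * M + 2 * k * M) * ((n : ℝ) - 2 * k) := by
          gcongr <;> linarith
      _ = 6 * k * M * ((n : ℝ) - 2 * k) := by ring
  have hrw : S / ((n : ℝ) - 2 * k) - X / n
      = (S * n - X * ((n : ℝ) - 2 * k)) / (((n : ℝ) - 2 * k) * n) := by
    field_simp
  rw [hrw, abs_div, abs_of_pos (mul_pos hD hnR), div_le_iff₀ (mul_pos hD hnR)]
  calc |S * n - X * ((n : ℝ) - 2 * k)| ≤ 6 * k * M * ((n : ℝ) - 2 * k) := main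
    _ = 6 * ((k : ℝ) / n) * M * (((n : ℝ) - 2 * k) * n) := by
        field_simp
end

section
/- Let F: ℝ^d × Y → ℝ be continuous in its first argument for each fixed y ∈ Y (Y a measurable space), measurable in y for each fixed μ, and convex in μ. Suppose for every y the set K(y) = argmin_{μ∈ℝ^d} F(μ, y) is nonempty and compact. Then for every compact K ⊂ ℝ^d with a countable dense subset K∩D (D countable dense in ℝ^d), the set {y : K(y) ∩ K ≠ ∅} equals ⋂_{m≥1} ⋃_{μ ∈ K∩D} ⋂_{μ'∈D} {y : F(μ, y) ≤ F(μ', y) + 1/m}, and in particular it is measurable. -/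
/-- Measurability of the argmin hitting set (Section D): under continuity, measurability,
convexity and compact nonempty argmin sets, the set of samples whose argmin set meets a
compact `K` is a countable intersection/union of measurable sets, hence measurable. -/
theorem stmt_15 {d : ℕ} {Y : Type*} [MeasurableSpace Y]
    (F : (Fin d → ℝ) → Y → ℝ)
    (hcont : ∀ y, Continuous fun μ => F μ y)
    (hmeas : ∀ μ, Measurable fun y => F μ y)
    (hconv : ∀ y, ConvexOn ℝ Set.univ fun μ => F μ y)
    (harg : ∀ y, {μ | ∀ μ', F μ y ≤ F μ' y}.Nonempty
      ∧ IsCompact {μ | ∀ μ', F μ y ≤ F μ' y})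
    (K : Set (Fin d → ℝ)) (hK : IsCompact K)
    (D : Set (Fin d → ℝ)) (hDcount : D.Countable) (hDdense : Dense D)
    (hKD : K ⊆ closure (K ∩ D)) :
    {y | ∃ μ ∈ K, ∀ μ', F μ y ≤ F μ' y}
        = ⋂ (m : ℕ) (_ : 1 ≤ m), ⋃ μ ∈ K ∩ D, ⋂ μ' ∈ D,
            {y | F μ y ≤ F μ' y + 1 / (m : ℝ)}
      ∧ MeasurableSet {y | ∃ μ ∈ K, ∀ μ', F μ y ≤ F μ' y} := by
  have heq : {y | ∃ μ ∈ K, ∀ μ', F μ y ≤ F μ' y}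
      = ⋂ (m : ℕ) (_ : 1 ≤ m), ⋃ μ ∈ K ∩ D, ⋂ μ' ∈ D,
          {y | F μ y ≤ F μ' y + 1 / (m : ℝ)} := by
    ext y
    simp only [Set.mem_setOf_eq, Set.mem_iInter, Set.mem_iUnion, Set.mem_inter_iff]
    constructor
    · rintro ⟨μ, hμK, hmin⟩ m hm
      have hmpos : (0 : ℝ) < 1 / (m : ℝ) := by positivity
      -- open neighborhood of μ where F is close to its min
      have hopen : IsOpen {ν | F ν y < F μ y + 1 / (m : ℝ)} :=
        isOpen_lt (hcont y) continuous_const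
      have hμmem : μ ∈ {ν | F ν y < F μ y + 1 / (m : ℝ)} := by
        simp only [Set.mem_setOf_eq]; linarith
      have := hKD hμK
      rw [mem_closure_iff] at this
      obtain ⟨μ₀, hμ₀U, hμ₀KD⟩ := this _ hopen hμmem
      refine ⟨μ₀, ⟨hμ₀KD.1, hμ₀KD.2⟩, ?_⟩
      intro μ' _
      have h1 : F μ₀ y < F μ y + 1 / (m : ℝ) := hμ₀U
      have h2 : F μ y ≤ F μ' y := hmin μ'
      linarith
    · intro h
      -- decreasing family of closed nonempty subsets of K
      set Z : ℕ → Set (Fin d → ℝ) :=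
        fun n => {μ ∈ K | ∀ μ', F μ y ≤ F μ' y + 1 / ((n : ℝ) + 1)} with hZ
      have hZclosed : ∀ n, IsClosed (Z n) := by
        intro n
        have : Z n = K ∩ ⋂ μ', {μ | F μ y ≤ F μ' y + 1 / ((n : ℝ) + 1)} := by
          ext μ; simp [hZ, Set.mem_iInter]
        rw [this]
        exact hK.isClosed.inter (isClosed_iInter fun μ' =>
          isClosed_le (hcont y) continuous_const)
      have hZne : ∀ n, (Z n).Nonempty := by
        intro n
        obtain ⟨μ₀, ⟨hμ₀K, hμ₀D⟩, hμ₀⟩ := h (n + 1) (Nat.le_add_left 1 n)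
        refine ⟨μ₀, hμ₀K, ?_⟩
        -- extend inequality from D to all of ℝ^d by density and continuity
        intro μ'
        have hcl : IsClosed {ν | F μ₀ y ≤ F ν y + 1 / ((n : ℝ) + 1)} :=
          isClosed_le continuous_const (by continuity)
        have hsub : D ⊆ {ν | F μ₀ y ≤ F ν y + 1 / ((n : ℝ) + 1)} := by
          intro ν hν
          have := hμ₀ ν hν
          simpa [Nat.cast_add, Nat.cast_one] using this
        have : closure D ⊆ {ν | F μ₀ y ≤ F ν y + 1 / ((n : ℝ) + 1)} :=
          hcl.closure_subset_iff.mpr hsub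
        exact this (hDdense.closure_eq ▸ Set.mem_univ μ')
      have hZanti : ∀ n, Z (n + 1) ⊆ Z n := by
        intro n μ hμ
        refine ⟨hμ.1, fun μ' => ?_⟩
        have := hμ.2 μ'
        have hle : 1 / ((n : ℝ) + 1 + 1) ≤ 1 / ((n : ℝ) + 1) := by
          apply one_div_le_one_div_of_le <;> push_cast <;> linarith
        push_cast at this ⊢
        linarith
      have hZcpt : IsCompact (Z 0) :=
        hK.of_isClosed_subset (hZclosed 0) fun μ hμ => hμ.1
      obtain ⟨μ, hμ⟩ := IsCompact.nonempty_iInter_of_sequence_nonempty_isCompact_isClosed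
        Z hZanti hZne hZcpt hZclosed
      simp only [Set.mem_iInter] at hμ
      refine ⟨μ, (hμ 0).1, fun μ' => ?_⟩
      refine le_of_forall_pos_le_add fun ε hε => ?_
      obtain ⟨n, hn⟩ := exists_nat_one_div_lt hε
      have := (hμ n).2 μ'
      linarith
  refine ⟨heq, ?_⟩
  rw [heq]
  refine MeasurableSet.iInter fun m => MeasurableSet.iInter fun _ => ?_
  refine MeasurableSet.biUnion (hDcount.mono Set.inter_subset_right) fun μ _ => ?_
  refine MeasurableSet.biInter hDcount fun μ' _ => ?_
  exact measurableSet_le (hmeas μ) ((hmeas μ').add_const _)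
end

section
/- Let X_1, …, X_n be independent random vectors taking values in {0,1}^d, and set ρ = max_{j∈[d]} (1/n) Σ_{i=1}^n E[X_{i,j}]. Then P( max_{j∈[d]} (1/n) Σ_{i=1}^n X_{i,j} ≥ 3 ln(1+d)/n + 7ρ ) ≤ 2 e^{−nρ}. -/
open MeasureTheory ProbabilityTheory

/-!
A Chernoff bound at `λ = 1` for each coordinate sum: a `{0,1}`-valued variable of mean `p` has
`E e^{λY} = 1 + (e^λ - 1) p ≤ e^{(e^λ - 1) p}`, so by independence `P(S_j ≥ a) ≤ e^{-a + (e - 1) nρ}`.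
A union bound over the `d` coordinates costs a factor `d`, which `e^{-3 ln(1+d)}` absorbs, and the
remaining `e^{-7nρ + (e-1)nρ}` is at most `e^{-nρ}`.
-/

open Real

section Boolean

variable {Ω : Type*} [MeasurableSpace Ω] {μ : Measure Ω} {Y : Ω → ℝ}

lemma integrable_of_boolean [IsFiniteMeasure μ] (hY : Measurable Y)
    (hbool : ∀ ω, Y ω = 0 ∨ Y ω = 1) : Integrable Y μ :=
  (integrable_const (1 : ℝ)).mono' hY.aestronglyMeasurable
    (Filter.Eventually.of_forall fun ω => by rcases hbool ω with h | h <;> simp [h])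

lemma mgf_eq_of_boolean [IsProbabilityMeasure μ] (hY : Measurable Y)
    (hbool : ∀ ω, Y ω = 0 ∨ Y ω = 1) (t : ℝ) :
    mgf Y μ t = 1 + (exp t - 1) * μ[Y] := by
  have hexp : (fun ω => exp (t * Y ω)) = fun ω => 1 + (exp t - 1) * Y ω := by
    funext ω; rcases hbool ω with h | h <;> simp [h]
  rw [mgf, hexp, integral_add (integrable_const 1) ((integrable_of_boolean hY hbool).const_mul _),
    integral_const_mul]
  simp

lemma mgf_le_exp_of_boolean [IsProbabilityMeasure μ] (hY : Measurable Y)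
    (hbool : ∀ ω, Y ω = 0 ∨ Y ω = 1) (t : ℝ) :
    mgf Y μ t ≤ exp ((exp t - 1) * μ[Y]) := by
  rw [mgf_eq_of_boolean hY hbool, add_comm]
  exact add_one_le_exp _

lemma measureReal_le_sum_le_of_boolean {ι : Type*} {Y : ι → Ω → ℝ} (hindep : iIndepFun Y μ)
    (hY : ∀ i, Measurable (Y i)) (hbool : ∀ i ω, Y i ω = 0 ∨ Y i ω = 1)
    (s : Finset ι) (a : ℝ) {t : ℝ} (ht : 0 ≤ t) :
    μ.real {ω | a ≤ ∑ i ∈ s, Y i ω} ≤ exp (-t * a + (exp t - 1) * ∑ i ∈ s, μ[Y i]) := by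
  have : IsProbabilityMeasure μ := hindep.isProbabilityMeasure
  have hsum : (fun ω => ∑ i ∈ s, Y i ω) = ∑ i ∈ s, Y i := by
    funext ω; simp
  have hint : Integrable (fun ω => exp (t * ∑ i ∈ s, Y i ω)) μ := by
    refine (integrable_const (exp (t * s.card))).mono' (by fun_prop)
      (Filter.Eventually.of_forall fun ω => ?_)
    rw [norm_of_nonneg (exp_pos _).le, exp_le_exp]
    refine mul_le_mul_of_nonneg_left ?_ ht
    calc ∑ i ∈ s, Y i ω ≤ ∑ _i ∈ s, (1 : ℝ) :=
          Finset.sum_le_sum fun i _ => by rcases hbool i ω with h | h <;> simp [h]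
      _ = s.card := by simp
  calc μ.real {ω | a ≤ ∑ i ∈ s, Y i ω}
      ≤ exp (-t * a) * mgf (∑ i ∈ s, Y i) μ t := by
        rw [← hsum]; exact measure_ge_le_exp_mul_mgf a ht hint
    _ = exp (-t * a) * ∏ i ∈ s, mgf (Y i) μ t := by rw [hindep.mgf_sum hY]
    _ ≤ exp (-t * a) * ∏ i ∈ s, exp ((exp t - 1) * μ[Y i]) := by
        gcongr with i
        · exact fun i _ => mgf_nonneg
        · exact mgf_le_exp_of_boolean (hY i) (hbool i) t
    _ = exp (-t * a + (exp t - 1) * ∑ i ∈ s, μ[Y i]) := by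
        rw [← exp_sum, ← exp_add, Finset.mul_sum]

end Boolean

lemma mul_exp_neg_mul_log_one_add_le_one {x c : ℝ} (hx : 0 ≤ x) (hc : 1 ≤ c) :
    x * exp (-(c * log (1 + x))) ≤ 1 := by
  have hlog : 0 ≤ log (1 + x) := log_nonneg (by linarith)
  calc x * exp (-(c * log (1 + x))) ≤ x * exp (-log (1 + x)) := by
        gcongr; nlinarith
    _ = x / (1 + x) := by rw [exp_neg, exp_log (by linarith), div_eq_mul_inv]
    _ ≤ 1 := (div_le_one (by linarith)).2 (by linarith)

lemma setOf_le_ciSup_eq_iUnion {Ω ι α : Type*} [Finite ι] [Nonempty ι]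
    [ConditionallyCompleteLinearOrder α] (f : ι → Ω → α) (c : α) :
    {ω | c ≤ ⨆ j, f j ω} = ⋃ j, {ω | c ≤ f j ω} := by
  ext ω
  simp only [Set.mem_ofPred_eq, Set.mem_iUnion]
  constructor
  · obtain ⟨j, hj⟩ := exists_eq_ciSup_of_finite (f := fun j => f j ω)
    exact fun h => ⟨j, hj ▸ h⟩
  · exact fun ⟨j, hj⟩ => hj.trans (Finite.le_ciSup (fun j => f j ω) j)

/-- Counting lemma for boolean random variables (Lemma B.1): for independent
`{0,1}^d`-valued `X_1,…,X_n` and `ρ = max_j (1/n) Σ_i E X_{i,j}`,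
`P(max_j (1/n) Σ_i X_{i,j} ≥ 3 ln(1+d)/n + 7ρ) ≤ 2 e^{−nρ}`. -/
theorem stmt_19 {Ω : Type*} [MeasurableSpace Ω] (μ : Measure Ω) [IsProbabilityMeasure μ]
    (n d : ℕ) (hn : 0 < n) (hd : 0 < d)
    (X : Fin n → Ω → Fin d → ℝ)
    (hmeas : ∀ i, Measurable (X i))
    (hbool : ∀ i ω j, X i ω j = 0 ∨ X i ω j = 1)
    (hindep : iIndepFun X μ)
    (ρ : ℝ)
    (hρ : ρ = ⨆ j : Fin d, (1 / (n : ℝ)) * ∑ i, ∫ ω, X i ω j ∂μ) :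
    μ {ω | 3 * Real.log (1 + d) / n + 7 * ρ
        ≤ ⨆ j : Fin d, (1 / (n : ℝ)) * ∑ i, X i ω j}
      ≤ ENNReal.ofReal (2 * Real.exp (-(n * ρ))) := by
  have : Nonempty (Fin d) := ⟨⟨0, hd⟩⟩
  have hn' : (0 : ℝ) < n := by exact_mod_cast hn
  set L := log (1 + d)
  set M := (n : ℝ) * ρ
  have hmean : ∀ j, ∑ i, μ[fun ω => X i ω j] ≤ M := fun j => by
    have := Finite.le_ciSup (fun j : Fin d => (1 / (n : ℝ)) * ∑ i, ∫ ω, X i ω j ∂μ) j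
    rw [← hρ, one_div, inv_mul_le_iff₀ hn'] at this
    exact this
  have hM : 0 ≤ M := (Finset.sum_nonneg fun i _ =>
    integral_nonneg fun ω => by rcases hbool i ω ⟨0, hd⟩ with h | h <;> simp [h]).trans
      (hmean ⟨0, hd⟩)
  have hevent : {ω | 3 * L / n + 7 * ρ ≤ ⨆ j : Fin d, (1 / (n : ℝ)) * ∑ i, X i ω j}
      = ⋃ j, {ω | 3 * L + 7 * M ≤ ∑ i, X i ω j} := by
    rw [setOf_le_ciSup_eq_iUnion]
    refine Set.iUnion_congr fun j => Set.ext fun ω => ?_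
    simp only [Set.mem_ofPred_eq]
    rw [one_div, le_inv_mul_iff₀ hn', mul_add, mul_div_cancel₀ _ hn'.ne', mul_left_comm]
  have hcoord : ∀ j, μ.real {ω | 3 * L + 7 * M ≤ ∑ i, X i ω j} ≤ exp (-(3 * L)) * exp (-M) := by
    intro j
    have hindep_j : iIndepFun (fun i ω => X i ω j) μ :=
      hindep.comp (fun _ v => v j) fun _ => measurable_pi_apply j
    refine (measureReal_le_sum_le_of_boolean hindep_j (fun i => (hmeas i).eval)
      (fun i ω => hbool i ω j) _ _ zero_le_one).trans ?_
    rw [← exp_add, exp_le_exp]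
    nlinarith [hmean j, exp_one_lt_d9, exp_one_gt_d9]
  rw [← ofReal_measureReal, hevent]
  refine ENNReal.ofReal_le_ofReal ?_
  calc μ.real (⋃ j, {ω | 3 * L + 7 * M ≤ ∑ i, X i ω j})
      ≤ ∑ j, μ.real {ω | 3 * L + 7 * M ≤ ∑ i, X i ω j} := measureReal_iUnion_fintype_le _
    _ ≤ ∑ _j : Fin d, exp (-(3 * L)) * exp (-M) := Finset.sum_le_sum fun j _ => hcoord j
    _ = (d * exp (-(3 * L))) * exp (-M) := by simp [mul_assoc]
    _ ≤ 1 * exp (-M) := by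
        gcongr; exact mul_exp_neg_mul_log_one_add_le_one d.cast_nonneg (by norm_num)
    _ ≤ 2 * exp (-M) := by linarith [exp_pos (-M)]
end
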